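/- arXiv:1806.08919 — 2 statements merged into one kernel-verified Lean document; each statement's English description precedes it below -/
import Mathlib

section
/- Let n ≥ 1 and let a⁽⁰⁾, a⁽¹⁾, …, a⁽ᴷ⁾ : Fin n → ℕ be a sequence of tuples together with indices i₀, i₁, …, i_K ∈ Fin n such that for every k with 1 ≤ k ≤ K: (i) i_k ≠ i_{k−1}; (ii) a⁽ᵏ⁾ agrees with a⁽ᵏ⁻¹⁾ at every index other than i_{k−1}; (iii) a⁽ᵏ⁾(i_{k−1}) + 1 ≤ a⁽ᵏ⁻¹⁾(i_k). Suppose moreover that a⁽ᵏ⁾(i) ≤ M − 1 for all k ≥ 1 and all i, where M = max_i a⁽⁰⁾(i). Then for every k ≥ 1 one has Σ_i a⁽ᵏ⁾(i) ≤ Σ_i a⁽⁰⁾(i) + M − k − 1. -/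
/-!
Along the sequence, the potential `∑ i, a k i - a k (idx k)` drops by at least one at every move:
the move at `idx (k - 1)` lowers that coordinate below `a (k - 1) (idx k)`, which is the new
active value. After `k` moves the potential is therefore at most `∑ i, a 0 i - a 0 (idx 0) - k`,
and the active value `a k (idx k)` is at most `univ.sup (a 0) - 1`.
-/

open Finset

theorem Fintype.sum_add_apply_eq_sum_add_apply_of_eq_of_ne {ι M : Type*} [Fintype ι]
    [AddCommMonoid M] {f g : ι → M} {j : ι} (h : ∀ i, i ≠ j → f i = g i) :
    ∑ i, f i + g j = ∑ i, g i + f j := by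
  classical
  rw [← add_sum_erase _ f (mem_univ j), ← add_sum_erase _ g (mem_univ j),
    Finset.sum_congr rfl fun i hi => h i (ne_of_mem_erase hi)]
  abel

theorem sum_add_apply_lt_of_move {ι : Type*} [Fintype ι] {a a' : ι → ℕ} {j j' : ι}
    (hne : j' ≠ j) (hagree : ∀ i, i ≠ j → a' i = a i) (hdec : a' j + 1 ≤ a j') :
    ∑ i, a' i + a j < ∑ i, a i + a' j' := by
  have hswap := Fintype.sum_add_apply_eq_sum_add_apply_of_eq_of_ne hagree
  have hj' := hagree j' hne
  omega

theorem add_add_le_add_of_forall_add_lt {x y : ℕ → ℕ} {K : ℕ}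
    (h : ∀ k < K, x (k + 1) + y k < x k + y (k + 1)) :
    ∀ k ≤ K, x k + y 0 + k ≤ x 0 + y k := by
  intro k hk
  induction k with
  | zero => simp
  | succ k ih =>
    have hstep := h k hk
    have hprev := ih (by omega)
    omega

theorem stmt_1_general (n K : ℕ) (a : ℕ → Fin n → ℕ) (idx : ℕ → Fin n)
    (hne : ∀ k, 1 ≤ k → k ≤ K → idx k ≠ idx (k - 1))
    (hagree : ∀ k, 1 ≤ k → k ≤ K → ∀ i : Fin n, i ≠ idx (k - 1) → a k i = a (k - 1) i)
    (hdec : ∀ k, 1 ≤ k → k ≤ K → a k (idx (k - 1)) + 1 ≤ a (k - 1) (idx k))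
    (hbound : ∀ k, 1 ≤ k → k ≤ K → ∀ i : Fin n,
      a k i + 1 ≤ Finset.univ.sup (a 0)) :
    ∀ k, 1 ≤ k → k ≤ K →
      (∑ i, a k i) + k + 1 ≤ (∑ i, a 0 i) + Finset.univ.sup (a 0) := by
  have hmove : ∀ k < K,
      ∑ i, a (k + 1) i + a k (idx k) < ∑ i, a k i + a (k + 1) (idx (k + 1)) := by
    intro k hk
    have hk₁ : 1 ≤ k + 1 := by omega
    have hkK : k + 1 ≤ K := by omega
    exact sum_add_apply_lt_of_move (hne _ hk₁ hkK) (hagree _ hk₁ hkK) (hdec _ hk₁ hkK)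
  intro k hk hkK
  have hpotential := add_add_le_add_of_forall_add_lt (x := fun k => ∑ i, a k i)
    (y := fun k => a k (idx k)) hmove k hkK
  have hactive := hbound k hk hkK (idx k)
  omega

theorem stmt_1 (n K : ℕ) (hn : 1 ≤ n) (a : ℕ → Fin n → ℕ) (idx : ℕ → Fin n)
    (hne : ∀ k, 1 ≤ k → k ≤ K → idx k ≠ idx (k - 1))
    (hagree : ∀ k, 1 ≤ k → k ≤ K → ∀ i : Fin n, i ≠ idx (k - 1) → a k i = a (k - 1) i)
    (hdec : ∀ k, 1 ≤ k → k ≤ K → a k (idx (k - 1)) + 1 ≤ a (k - 1) (idx k))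
    (hbound : ∀ k, 1 ≤ k → k ≤ K → ∀ i : Fin n,
      a k i + 1 ≤ Finset.univ.sup (a 0)) :
    ∀ k, 1 ≤ k → k ≤ K →
      (∑ i, a k i) + k + 1 ≤ (∑ i, a 0 i) + Finset.univ.sup (a 0) :=
  stmt_1_general n K a idx hne hagree hdec hbound
end

section
/- Let n ≥ 1 and let a⁽⁰⁾, a⁽¹⁾, …, a⁽ᴷ⁾ : Fin n → ℕ and indices i₀, …, i_K ∈ Fin n be as follows: for every k with 1 ≤ k ≤ K, one has i_k ≠ i_{k−1}, the tuple a⁽ᵏ⁾ agrees with a⁽ᵏ⁻¹⁾ at every index other than i_{k−1}, and a⁽ᵏ⁾(i_{k−1}) + 1 ≤ a⁽ᵏ⁻¹⁾(i_k); assume also a⁽ᵏ⁾(i) ≤ max_j a⁽⁰⁾(j) − 1 for all k ≥ 1 and all i. Then K ≤ Σ_i a⁽⁰⁾(i) + max_i a⁽⁰⁾(i). In particular, there is no infinite sequence of tuples satisfying these conditions. -/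
/-! The potential `∑_{i ≠ i_k} a⁽ᵏ⁾(i)` drops by at least one at every move: the move lowers
`a(i_{k-1})` below `a(i_k)`, and the coordinate left out of the sum switches from `i_{k-1}` to
`i_k`. A strictly decreasing sequence of naturals has at most as many steps as its initial
value, which is at most `∑ a⁽⁰⁾`. -/

open Finset

theorem sum_erase_lt_of_update {ι : Type*} [Fintype ι] [DecidableEq ι] {f g : ι → ℕ} {p q : ι}
    (hqp : q ≠ p) (hagree : ∀ i, i ≠ p → g i = f i) (hlt : g p < f q) :
    ∑ i ∈ univ.erase q, g i < ∑ i ∈ univ.erase p, f i := by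
  have hrest : ∑ i ∈ (univ.erase q).erase p, g i = ∑ i ∈ (univ.erase p).erase q, f i := by
    rw [erase_right_comm]
    exact sum_congr rfl fun i hi => hagree i (ne_of_mem_erase (mem_of_mem_erase hi))
  rw [← add_sum_erase _ g (mem_erase.2 ⟨hqp.symm, mem_univ p⟩),
    ← add_sum_erase _ f (mem_erase.2 ⟨hqp, mem_univ q⟩), hrest]
  omega

theorem add_le_apply_zero_of_lt_succ {f : ℕ → ℕ} {K : ℕ} (hf : ∀ k < K, f (k + 1) < f k) :
    ∀ k ≤ K, k + f k ≤ f 0 := by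
  intro k hk
  induction k with
  | zero => simp
  | succ k ih =>
    have := hf k hk
    have := ih (Nat.le_of_succ_le hk)
    omega

theorem stmt_2_general (n K : ℕ) (a : ℕ → Fin n → ℕ) (idx : ℕ → Fin n)
    (hne : ∀ k, 1 ≤ k → k ≤ K → idx k ≠ idx (k - 1))
    (hagree : ∀ k, 1 ≤ k → k ≤ K → ∀ i : Fin n, i ≠ idx (k - 1) → a k i = a (k - 1) i)
    (hdec : ∀ k, 1 ≤ k → k ≤ K → a k (idx (k - 1)) + 1 ≤ a (k - 1) (idx k)) :
    K ≤ (∑ i, a 0 i) + Finset.univ.sup (a 0) := by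
  set potential : ℕ → ℕ := fun k => ∑ i ∈ univ.erase (idx k), a k i
  have hstep : ∀ k < K, potential (k + 1) < potential k := fun k hk =>
    sum_erase_lt_of_update (hne (k + 1) k.succ_pos hk) (hagree (k + 1) k.succ_pos hk)
      (hdec (k + 1) k.succ_pos hk)
  have hK := add_le_apply_zero_of_lt_succ hstep K le_rfl
  have hinit : potential 0 ≤ ∑ i, a 0 i := sum_le_sum_of_subset (erase_subset _ _)
  omega

theorem stmt_2 (n K : ℕ) (hn : 1 ≤ n) (a : ℕ → Fin n → ℕ) (idx : ℕ → Fin n)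
    (hne : ∀ k, 1 ≤ k → k ≤ K → idx k ≠ idx (k - 1))
    (hagree : ∀ k, 1 ≤ k → k ≤ K → ∀ i : Fin n, i ≠ idx (k - 1) → a k i = a (k - 1) i)
    (hdec : ∀ k, 1 ≤ k → k ≤ K → a k (idx (k - 1)) + 1 ≤ a (k - 1) (idx k))
    (hbound : ∀ k, 1 ≤ k → k ≤ K → ∀ i : Fin n,
      a k i + 1 ≤ Finset.univ.sup (a 0)) :
    K ≤ (∑ i, a 0 i) + Finset.univ.sup (a 0) :=
  stmt_2_general n K a idx hne hagree hdec
end
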